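/- arXiv:1601.02512 — 2 statements merged into one kernel-verified Lean document; each statement's English description precedes it below -/
import Mathlib

section
/- Let (X,d,⪯) be an ordered complete metric space and F: Xⁿ → X a mapping with the monotone property (xᵢ ⪯ yᵢ for all i implies F(x₁,...,xₙ) ⪯ F(y₁,...,yₙ)). Assume: (a) either F is continuous, or for every increasing sequence xₘ converging to x in X one has xₘ ⪯ x for all m (ICU property); (b) there exist x₁⁽⁰⁾,...,xₙ⁽⁰⁾ ∈ X with xᵢ⁽⁰⁾ ⪯ F(x_{i∗1}⁽⁰⁾,...,x_{i∗n}⁽⁰⁾) for each i ∈ Iₙ, where ∗ is a binary operation on Iₙ; (c) there exists α ∈ [0,1) such that maxᵢ d(F(x_{i∗1},...,x_{i∗n}), F(y_{i∗1},...,y_{i∗n})) ≤ α·maxᵢ d(xᵢ,yᵢ) for all x₁,...,xₙ,y₁,...,yₙ ∈ X with either xᵢ ⪯ yᵢ for all i or xᵢ ⪰ yᵢ for all i. Then F has a ∗-fixed point: there exist x₁,...,xₙ ∈ X with F(x_{i∗1},...,x_{i∗n}) = xᵢ for each i ∈ Iₙ. -/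
open Filter

/-- a `∗`-fixed point theorem for a mapping `F : Xⁿ → X` with the
monotone property under a linear `max`-contraction in an ordered complete
metric space. -/
theorem stmt_18 {X : Type*} [MetricSpace X] [CompleteSpace X] [PartialOrder X]
    {n : ℕ} (hn : 2 ≤ n)
    (F : (Fin n → X) → X) (s : Fin n → Fin n → Fin n)
    (hmono : ∀ x y : Fin n → X, (∀ i, x i ≤ y i) → F x ≤ F y)
    (hcont : Continuous F ∨
      ∀ (x : ℕ → X) (l : X), Monotone x → Tendsto x atTop (nhds l) →
        ∀ m, x m ≤ l)
    (x0 : Fin n → X) (hx0 : ∀ i, x0 i ≤ F (fun k => x0 (s i k)))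
    (α : ℝ) (hα0 : 0 ≤ α) (hα1 : α < 1)
    (hcontr : ∀ x y : Fin n → X,
      ((∀ i, x i ≤ y i) ∨ (∀ i, y i ≤ x i)) →
      (⨆ i, dist (F (fun k => x (s i k))) (F (fun k => y (s i k)))) ≤
        α * ⨆ i, dist (x i) (y i)) :
    ∃ x : Fin n → X, ∀ i, F (fun k => x (s i k)) = x i := by
  haveI : Nonempty (Fin n) := ⟨⟨0, by omega⟩⟩
  -- iterated sequence
  let Y : ℕ → Fin n → X := fun m => Nat.rec x0 (fun _ xm i => F (fun k => xm (s i k))) m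
  have hYsucc : ∀ m i, Y (m + 1) i = F (fun k => Y m (s i k)) := fun m i => rfl
  have hmonoY : ∀ m i, Y m i ≤ Y (m + 1) i := by
    intro m
    induction m with
    | zero => exact hx0
    | succ m ih =>
      intro i
      exact hmono _ _ fun k => ih (s i k)
  have hmonoY' : ∀ i, Monotone fun m => Y m i :=
    fun i => monotone_nat_of_le_succ fun m => hmonoY m i
  have hbdd : ∀ (f : Fin n → ℝ), BddAbove (Set.range f) :=
    fun f => (Set.finite_range f).bddAbove
  set D : ℕ → ℝ := fun m => ⨆ i, dist (Y m i) (Y (m + 1) i) with hD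
  have hDrec : ∀ m, D (m + 1) ≤ α * D m := by
    intro m
    have h := hcontr (Y m) (Y (m + 1)) (Or.inl (hmonoY m))
    simpa [hD, hYsucc] using h
  have hDgeo : ∀ m, D m ≤ α ^ m * D 0 := by
    intro m
    induction m with
    | zero => simp
    | succ m ih =>
      calc D (m + 1) ≤ α * D m := hDrec m
        _ ≤ α * (α ^ m * D 0) := by
            apply mul_le_mul_of_nonneg_left ih hα0
        _ = α ^ (m + 1) * D 0 := by ring
  have hcoord : ∀ i m, dist (Y m i) (Y (m + 1) i) ≤ D 0 * α ^ m := by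
    intro i m
    calc dist (Y m i) (Y (m + 1) i) ≤ D m := le_ciSup (f := fun j => dist (Y m j) (Y (m + 1) j)) (hbdd _) i
      _ ≤ α ^ m * D 0 := hDgeo m
      _ = D 0 * α ^ m := mul_comm _ _
  have hcauchy : ∀ i, CauchySeq fun m => Y m i := fun i =>
    cauchySeq_of_le_geometric α (D 0) hα1 (hcoord i)
  have hlim : ∀ i, ∃ l : X, Tendsto (fun m => Y m i) atTop (nhds l) :=
    fun i => cauchySeq_tendsto_of_complete (hcauchy i)
  choose x hx using hlim
  have hx' : ∀ i, Tendsto (fun m => Y (m + 1) i) atTop (nhds (x i)) :=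
    fun i => (hx i).comp (tendsto_add_atTop_nat 1)
  refine ⟨x, fun i => ?_⟩
  rcases hcont with hF | hICU
  · -- continuous case
    have h1 : Tendsto (fun m => F (fun k => Y m (s i k))) atTop
        (nhds (F (fun k => x (s i k)))) := by
      apply (hF.tendsto _).comp
      exact tendsto_pi_nhds.mpr fun k => hx (s i k)
    have h2 : Tendsto (fun m => F (fun k => Y m (s i k))) atTop (nhds (x i)) := by
      simpa [hYsucc] using hx' i
    exact tendsto_nhds_unique h1 h2
  · -- ICU case
    have hle : ∀ m j, Y m j ≤ x j := fun m j => hICU _ _ (hmonoY' j) (hx j) m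
    have hS0 : Tendsto (fun m => ⨆ j, dist (Y m j) (x j)) atTop (nhds 0) := by
      have hsum : Tendsto (fun m => ∑ j, dist (Y m j) (x j)) atTop (nhds 0) := by
        have : Tendsto (fun m => ∑ j, dist (Y m j) (x j)) atTop
            (nhds (∑ j : Fin n, (0 : ℝ))) := by
          apply tendsto_finset_sum
          intro j _
          simpa using (hx j).dist (tendsto_const_nhds (x := x j))
        simpa using this
      apply squeeze_zero
      · intro m
        exact Real.iSup_nonneg fun j => dist_nonneg
      · intro m
        exact ciSup_le fun j => Finset.single_le_sum
          (fun k _ => dist_nonneg) (Finset.mem_univ j)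
      · exact hsum
    have hkey : ∀ m, dist (Y (m + 1) i) (F fun k => x (s i k)) ≤
        α * ⨆ j, dist (Y m j) (x j) := by
      intro m
      have h1 := hcontr (Y m) x (Or.inl (hle m))
      calc dist (Y (m + 1) i) (F fun k => x (s i k))
          = dist (F fun k => Y m (s i k)) (F fun k => x (s i k)) := by rw [hYsucc]
        _ ≤ ⨆ j, dist (F fun k => Y m (s j k)) (F fun k => x (s j k)) :=
            le_ciSup (f := fun j => dist (F fun k => Y m (s j k)) (F fun k => x (s j k))) (hbdd _) i
        _ ≤ α * ⨆ j, dist (Y m j) (x j) := h1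
    have h2 : Tendsto (fun m => Y (m + 1) i) atTop (nhds (F fun k => x (s i k))) := by
      rw [tendsto_iff_dist_tendsto_zero]
      apply squeeze_zero (fun m => dist_nonneg) hkey
      simpa using hS0.const_mul α
    exact tendsto_nhds_unique h2 (hx' i)
end

section
/- Let (X,d,⪯) be an ordered complete metric space and F: X² → X a mapping such that F(x,y) is increasing in each variable (x₁ ⪯ x₂ implies F(x₁,y) ⪯ F(x₂,y); y₁ ⪯ y₂ implies F(x,y₁) ⪯ F(x,y₂)). Suppose: (a) either F is continuous or X has the ICU property (every increasing convergent sequence is bounded above by its limit); (b) there exist x⁽⁰⁾, y⁽⁰⁾ ∈ X with x⁽⁰⁾ ⪯ F(x⁽⁰⁾,y⁽⁰⁾) and y⁽⁰⁾ ⪯ F(y⁽⁰⁾,x⁽⁰⁾); (c) there exists α ∈ [0,1) such that d(F(x,y),F(u,v)) ≤ (α/2)·(d(x,u) + d(y,v)) for all x,y,u,v ∈ X with x ⪯ u and y ⪯ v. Then F has a coupled fixed point: there exist x,y ∈ X with F(x,y) = x and F(y,x) = y. -/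
open Filter

/-- a coupled fixed point theorem for a mapping `F : X² → X`
increasing in each variable in an ordered complete metric space
(Radenović's monotone version of the Bhaskar–Lakshmikantham theorem). -/
theorem stmt_19 {X : Type*} [MetricSpace X] [CompleteSpace X] [PartialOrder X]
    (F : X → X → X)
    (hmono1 : ∀ x₁ x₂ y : X, x₁ ≤ x₂ → F x₁ y ≤ F x₂ y)
    (hmono2 : ∀ x y₁ y₂ : X, y₁ ≤ y₂ → F x y₁ ≤ F x y₂)
    (hcont : Continuous (fun p : X × X => F p.1 p.2) ∨
      ∀ (x : ℕ → X) (l : X), Monotone x → Tendsto x atTop (nhds l) →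
        ∀ m, x m ≤ l)
    (x0 y0 : X) (hx0 : x0 ≤ F x0 y0) (hy0 : y0 ≤ F y0 x0)
    (α : ℝ) (hα0 : 0 ≤ α) (hα1 : α < 1)
    (hcontr : ∀ x y u v : X, x ≤ u → y ≤ v →
      dist (F x y) (F u v) ≤ (α / 2) * (dist x u + dist y v)) :
    ∃ x y : X, F x y = x ∧ F y x = y := by
  -- iterate in the product space
  set z : ℕ → X × X := fun n =>
    Nat.rec (x0, y0) (fun _ p => (F p.1 p.2, F p.2 p.1)) n with hz
  have hzs : ∀ n, z (n + 1) = (F (z n).1 (z n).2, F (z n).2 (z n).1) := fun n => rfl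
  have hstep : ∀ n, z n ≤ z (n + 1) := by
    intro n
    induction n with
    | zero => exact ⟨hx0, hy0⟩
    | succ n ih =>
      simp only [hzs]
      exact ⟨le_trans (hmono1 _ _ _ ih.1) (hmono2 _ _ _ ih.2),
             le_trans (hmono1 _ _ _ ih.2) (hmono2 _ _ _ ih.1)⟩
  have hmonz : Monotone z := monotone_nat_of_le_succ hstep
  have hd : ∀ n, dist (z (n + 1)) (z (n + 2)) ≤ α * dist (z n) (z (n + 1)) := by
    intro n
    simp only [hzs]
    have h1 := hcontr (z n).1 (z n).2 (z (n + 1)).1 (z (n + 1)).2 (hstep n).1 (hstep n).2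
    have h2 := hcontr (z n).2 (z n).1 (z (n + 1)).2 (z (n + 1)).1 (hstep n).2 (hstep n).1
    have hm1 : dist (z n).1 (z (n + 1)).1 ≤ max (dist (z n).1 (z (n + 1)).1) (dist (z n).2 (z (n + 1)).2) := le_max_left _ _
    have hm2 : dist (z n).2 (z (n + 1)).2 ≤ max (dist (z n).1 (z (n + 1)).1) (dist (z n).2 (z (n + 1)).2) := le_max_right _ _
    rw [Prod.dist_eq]
    simp only [max_le_iff]
    constructor
    · calc dist (F (z n).1 (z n).2) (F (z (n+1)).1 (z (n+1)).2)
          ≤ (α / 2) * (dist (z n).1 (z (n + 1)).1 + dist (z n).2 (z (n + 1)).2) := h1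
        _ ≤ α * max (dist (z n).1 (z (n + 1)).1) (dist (z n).2 (z (n + 1)).2) := by nlinarith
    · calc dist (F (z n).2 (z n).1) (F (z (n+1)).2 (z (n+1)).1)
          ≤ (α / 2) * (dist (z n).2 (z (n + 1)).2 + dist (z n).1 (z (n + 1)).1) := h2
        _ ≤ α * max (dist (z n).1 (z (n + 1)).1) (dist (z n).2 (z (n + 1)).2) := by nlinarith
  have hgeom : ∀ n, dist (z n) (z (n + 1)) ≤ dist (z 0) (z 1) * α ^ n := by
    intro n
    induction n with
    | zero => simp
    | succ n ih =>
      calc dist (z (n + 1)) (z (n + 2)) ≤ α * dist (z n) (z (n + 1)) := hd n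
        _ ≤ α * (dist (z 0) (z 1) * α ^ n) := by nlinarith
        _ = dist (z 0) (z 1) * α ^ (n + 1) := by ring
  have hcauchy : CauchySeq z := cauchySeq_of_le_geometric α _ hα1 hgeom
  obtain ⟨p, hp⟩ := cauchySeq_tendsto_of_complete hcauchy
  have hp1 : Tendsto (fun n => (z n).1) atTop (nhds p.1) :=
    (continuous_fst.tendsto p).comp hp
  have hp2 : Tendsto (fun n => (z n).2) atTop (nhds p.2) :=
    (continuous_snd.tendsto p).comp hp
  -- the shifted sequence converges to the same limit
  have hps : Tendsto (fun n => z (n + 1)) atTop (nhds p) :=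
    hp.comp (tendsto_add_atTop_nat 1)
  have key : Tendsto (fun n => F (z n).1 (z n).2) atTop (nhds (F p.1 p.2)) ∧
      Tendsto (fun n => F (z n).2 (z n).1) atTop (nhds (F p.2 p.1)) := by
    rcases hcont with hc | hicu
    · constructor
      · exact (hc.tendsto p).comp hp
      · have hc' : Continuous (fun q : X × X => F q.2 q.1) :=
          hc.comp (continuous_snd.prodMk continuous_fst)
        exact (hc'.tendsto p).comp hp
    · have hle1 : ∀ n, (z n).1 ≤ p.1 :=
        hicu _ _ (fun a b hab => (hmonz hab).1) hp1
      have hle2 : ∀ n, (z n).2 ≤ p.2 :=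
        hicu _ _ (fun a b hab => (hmonz hab).2) hp2
      have hzero : Tendsto (fun n => (α / 2) * (dist (z n).1 p.1 + dist (z n).2 p.2))
          atTop (nhds 0) := by
        have h0 : Tendsto (fun n => dist (z n).1 p.1 + dist (z n).2 p.2) atTop (nhds 0) := by
          have := (tendsto_iff_dist_tendsto_zero.mp hp1).add
            (tendsto_iff_dist_tendsto_zero.mp hp2)
          simpa using this
        simpa using h0.const_mul (α / 2)
      constructor
      · rw [tendsto_iff_dist_tendsto_zero]
        exact squeeze_zero (fun n => dist_nonneg)
          (fun n => hcontr _ _ _ _ (hle1 n) (hle2 n)) hzero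
      · rw [tendsto_iff_dist_tendsto_zero]
        refine squeeze_zero (fun n => dist_nonneg)
          (fun n => hcontr _ _ _ _ (hle2 n) (hle1 n)) ?_
        have hzero' : Tendsto (fun n => (α / 2) * (dist (z n).2 p.2 + dist (z n).1 p.1))
            atTop (nhds 0) := by
          refine hzero.congr (fun n => by ring)
        exact hzero'
  -- the limit is a coupled fixed point
  have hfp1 : Tendsto (fun n => F (z n).1 (z n).2) atTop (nhds p.1) := by
    have : Tendsto (fun n => (z (n + 1)).1) atTop (nhds p.1) :=
      (continuous_fst.tendsto p).comp hps
    exact this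
  have hfp2 : Tendsto (fun n => F (z n).2 (z n).1) atTop (nhds p.2) := by
    have : Tendsto (fun n => (z (n + 1)).2) atTop (nhds p.2) :=
      (continuous_snd.tendsto p).comp hps
    exact this
  exact ⟨p.1, p.2, tendsto_nhds_unique key.1 hfp1, tendsto_nhds_unique key.2 hfp2⟩
end
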